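/- Let L be any of the modal systems K_nD, D_nD, T_nD, K45_nD, KD45_nD, S5_nD, let φ be a formula of L_D, let k ≥ dep(φ), and let P be the set of atoms occurring in φ. Then there exists a unique set Φ ⊆ D^P_k(L) such that φ ≡_L ⋁Φ. -/

import Mathlib

/-!
Common framework: multi-agent epistemic modal logic with distributed knowledge.
Agents are `Fin n`, atoms are natural numbers.
-/

namespace DKLogic

/-- Formulas of the language `L_D`: atoms, negation, conjunction, disjunction and the
distributed-knowledge modality `D_B` for nonempty sets `B` of agents (together with the
constants `⊤`/`⊥`, which the paper uses as the empty conjunction/disjunction). -/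
inductive Formula (n : ℕ) : Type
  | top : Formula n
  | bot : Formula n
  | atom : ℕ → Formula n
  | neg : Formula n → Formula n
  | and : Formula n → Formula n → Formula n
  | or : Formula n → Formula n → Formula n
  | D : {B : Finset (Fin n) // B.Nonempty} → Formula n → Formula n

namespace Formula

/-- Modal depth of a formula. -/
def depth {n : ℕ} : Formula n → ℕ
  | top => 0
  | bot => 0
  | atom _ => 0
  | neg φ => depth φ
  | and φ ψ => max (depth φ) (depth ψ)
  | or φ ψ => max (depth φ) (depth ψ)
  | D _ φ => depth φ + 1

/-- The atoms occurring in a formula. -/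
def atoms {n : ℕ} : Formula n → Finset ℕ
  | top => ∅
  | bot => ∅
  | atom q => {q}
  | neg φ => atoms φ
  | and φ ψ => atoms φ ∪ atoms ψ
  | or φ ψ => atoms φ ∪ atoms ψ
  | D _ φ => atoms φ

end Formula

/-- A Kripke model over world type `W` with `n` agents. -/
structure KModel (n : ℕ) (W : Type) where
  R : Fin n → W → W → Prop
  V : W → Set ℕ

/-- The distributed accessibility relation `R_B = ⋂_{i ∈ B} R_i`. -/
def KModel.RB {n : ℕ} {W : Type} (M : KModel n W) (B : Finset (Fin n)) (s t : W) : Prop :=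
  ∀ i ∈ B, M.R i s t

/-- Satisfaction. -/
def Sat {n : ℕ} {W : Type} (M : KModel n W) : W → Formula n → Prop
  | _, .top => True
  | _, .bot => False
  | s, .atom q => q ∈ M.V s
  | s, .neg φ => ¬ Sat M s φ
  | s, .and φ ψ => Sat M s φ ∧ Sat M s ψ
  | s, .or φ ψ => Sat M s φ ∨ Sat M s ψ
  | s, .D B φ => ∀ t : W, M.RB B.1 s t → Sat M t φ

/-- Seriality of a relation. -/
def Serial {W : Type} (R : W → W → Prop) : Prop := ∀ x, ∃ y, R x y

/-- Euclideanness of a relation. -/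
def Euclidean {W : Type} (R : W → W → Prop) : Prop := ∀ x y z, R x y → R x z → R y z

/-- The six modal systems. -/
inductive MSys : Type
  | K | D | T | K45 | KD45 | S5

/-- `L`-models: frame conditions on each accessibility relation for each system. -/
def IsModel {n : ℕ} {W : Type} : MSys → KModel n W → Prop
  | .K, _ => True
  | .D, M => ∀ i, Serial (M.R i)
  | .T, M => ∀ i, Reflexive (M.R i)
  | .K45, M => ∀ i, Transitive (M.R i) ∧ Euclidean (M.R i)
  | .KD45, M => ∀ i, Serial (M.R i) ∧ Transitive (M.R i) ∧ Euclidean (M.R i)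
  | .S5, M => ∀ i, Reflexive (M.R i) ∧ Transitive (M.R i) ∧ Euclidean (M.R i)

/-- Semantic consequence over `L`-models. -/
def Entails {n : ℕ} (L : MSys) (φ ψ : Formula n) : Prop :=
  ∀ (W : Type) (M : KModel n W), IsModel L M → ∀ s : W, Sat M s φ → Sat M s ψ

/-- Semantic equivalence over `L`-models. -/
def EquivL {n : ℕ} (L : MSys) (φ ψ : Formula n) : Prop :=
  Entails L φ ψ ∧ Entails L ψ φ

/-- `L`-satisfiability. -/
def SatL {n : ℕ} (L : MSys) (φ : Formula n) : Prop :=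
  ∃ (W : Type) (M : KModel n W) (s : W), IsModel L M ∧ Sat M s φ

/-- Collective `p`-bisimulation between two pointed models. -/
def CollPBisim {n : ℕ} {W W' : Type} (M : KModel n W) (s : W) (M' : KModel n W') (s' : W')
    (p : ℕ) : Prop :=
  ∃ ρ : W → W' → Prop, ρ s s' ∧
    ∀ u u', ρ u u' →
      ((∀ q : ℕ, q ≠ p → (q ∈ M.V u ↔ q ∈ M'.V u')) ∧
       (∀ B : Finset (Fin n), B.Nonempty → ∀ v, M.RB B u v → ∃ v', M'.RB B u' v' ∧ ρ v v') ∧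
       (∀ B : Finset (Fin n), B.Nonempty → ∀ v', M'.RB B u' v' → ∃ v, M.RB B u v ∧ ρ v v'))

/-- `ψ` is a result of forgetting `p` in `φ` in system `L`
(written `dforget_L(φ,p) ≡_L ψ` in the paper). -/
def IsForget {n : ℕ} (L : MSys) (φ : Formula n) (p : ℕ) (ψ : Formula n) : Prop :=
  ψ.atoms ⊆ φ.atoms.erase p ∧
  (∀ (W W' : Type) (M : KModel n W) (M' : KModel n W') (s : W) (s' : W'),
      IsModel L M → IsModel L M' → Sat M s φ → CollPBisim M s M' s' p → Sat M' s' ψ) ∧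
  (∀ (W' : Type) (M' : KModel n W') (s' : W'),
      IsModel L M' → Sat M' s' ψ →
      ∃ (W : Type) (M : KModel n W) (s : W), IsModel L M ∧ Sat M s φ ∧ CollPBisim M s M' s' p)

/-- `L` is closed under forgetting: `dforget_L(φ,p)` exists (as an `L`-satisfiable formula)
for every `L`-satisfiable `φ` and every atom `p`. -/
def ClosedUnderForgetting {n : ℕ} (L : MSys) : Prop :=
  ∀ (φ : Formula n) (p : ℕ), SatL L φ → ∃ ψ : Formula n, SatL L ψ ∧ IsForget L φ p ψ

/-- `ψ` is a uniform interpolant of `φ` in `L` over `P \ {p}`. -/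
def IsUI {n : ℕ} (L : MSys) (P : Finset ℕ) (p : ℕ) (φ ψ : Formula n) : Prop :=
  SatL L ψ ∧ ψ.atoms ⊆ P.erase p ∧
  ∀ χ : Formula n, p ∉ χ.atoms → (Entails L φ χ ↔ Entails L ψ χ)

/-- The uniform interpolation property for the system `L`. -/
def HasUIP {n : ℕ} (L : MSys) : Prop :=
  ∀ (P : Finset ℕ) (p : ℕ) (φ : Formula n),
    p ∈ P → φ.atoms ⊆ P → SatL L φ → ∃ ψ : Formula n, IsUI L P p φ ψ

/-! ### Canonical formulas -/

/-- Big conjunction of a list of formulas (`⊤` for the empty list). -/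
def bigAnd {n : ℕ} : List (Formula n) → Formula n
  | [] => .top
  | φ :: l => .and φ (bigAnd l)

/-- Big disjunction of a list of formulas (`⊥` for the empty list). -/
def bigOr {n : ℕ} : List (Formula n) → Formula n
  | [] => .bot
  | φ :: l => .or φ (bigOr l)

/-- An injective numerical code of formulas, used to fix a canonical ordering. -/
def fcode {n : ℕ} : Formula n → ℕ
  | .top => Nat.pair 0 0
  | .bot => Nat.pair 1 0
  | .atom q => Nat.pair 2 q
  | .neg φ => Nat.pair 3 (fcode φ)
  | .and φ ψ => Nat.pair 4 (Nat.pair (fcode φ) (fcode ψ))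
  | .or φ ψ => Nat.pair 5 (Nat.pair (fcode φ) (fcode ψ))
  | .D B φ => Nat.pair 6 (Nat.pair (B.1.sum fun i => 2 ^ (i : ℕ)) (fcode φ))

/-- Insert a formula into a strictly `fcode`-sorted list (dropping duplicates). -/
def insertF {n : ℕ} (φ : Formula n) : List (Formula n) → List (Formula n)
  | [] => [φ]
  | ψ :: l =>
      if fcode φ < fcode ψ then φ :: ψ :: l
      else if fcode φ = fcode ψ then ψ :: l
      else ψ :: insertF φ l

/-- The canonical (sorted, duplicate-free) list representing the set of formulas in `l`. -/
def normList {n : ℕ} (l : List (Formula n)) : List (Formula n) := l.foldr insertF []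

/-- The minterm of `P` that is positive exactly on `S`. -/
def minterm {n : ℕ} (P S : Finset ℕ) : Formula n :=
  bigAnd ((P.sort (· ≤ ·)).map fun q =>
    if q ∈ S then Formula.atom q else Formula.neg (Formula.atom q))

/-- The subset of `Fin n` whose characteristic bits are those of `m`. -/
def natToFinset (n m : ℕ) : Finset (Fin n) :=
  Finset.univ.filter fun i => m.testBit (i : ℕ)

/-- A canonical enumeration of all nonempty subsets of the agent set. -/
def neSubsets (n : ℕ) : List {B : Finset (Fin n) // B.Nonempty} :=
  ((List.range (2 ^ n)).map (natToFinset n)).filterMap fun B =>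
    if h : B.Nonempty then some ⟨B, h⟩ else none

/-- `∇_B Φ = D_B (⋁Φ) ∧ ⋀_{φ ∈ Φ} ¬ D_B ¬ φ`. -/
def nabla {n : ℕ} (B : {B : Finset (Fin n) // B.Nonempty}) (Φ : List (Formula n)) : Formula n :=
  Formula.and (Formula.D B (bigOr Φ))
    (bigAnd (Φ.map fun φ => Formula.neg (Formula.D B (Formula.neg φ))))

/-- Underlying data of a d-canonical formula: a set of (positive) atoms together with,
for every set `B` of agents, a list of successor data. -/
inductive CData (n : ℕ) : Type
  | mk (S : Finset ℕ) (succ : Finset (Fin n) → List (CData n)) : CData n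

/-- The positive-atom component. -/
def CData.S {n : ℕ} : CData n → Finset ℕ
  | mk S _ => S

/-- The `B`-successor data. -/
def CData.succ {n : ℕ} : CData n → Finset (Fin n) → List (CData n)
  | mk _ f => f

/-- The d-canonical formula of depth `k` over `P` determined by the data `d`:
`δ_0 ∧ ⋀_{B} ∇_B Φ_B`. -/
def toFormula {n : ℕ} (P : Finset ℕ) : ℕ → CData n → Formula n
  | 0, d => minterm P (d.S ∩ P)
  | (k+1), d =>
      Formula.and (minterm P (d.S ∩ P))
        (bigAnd ((neSubsets n).map fun B =>
          nabla B (normList ((d.succ B.1).map fun c => toFormula P k c))))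

/-- `D^P_k`: the set of d-canonical formulas of depth `k` over `P`. -/
def DP {n : ℕ} (P : Finset ℕ) (k : ℕ) : Set (Formula n) := Set.range (toFormula P k)

/-- `R_B(δ)` for `δ` the level-`k` canonical formula with data `d`:
the set of `B`-successor canonical formulas (of level `k - 1`). -/
def RBset {n : ℕ} (P : Finset ℕ) (k : ℕ) (d : CData n) (B : Finset (Fin n)) :
    Set (Formula n) :=
  {φ | ∃ c ∈ d.succ B, φ = toFormula P (k - 1) c}

/-- One pruning step `δ ↦ δ^↓` on data (first argument: the level of the input). -/
def downD {n : ℕ} : ℕ → CData n → CData n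
  | 0, d => d
  | 1, d => CData.mk d.S (fun _ => [])
  | (k+2), d => CData.mk d.S (fun B => (d.succ B).map fun c => downD (k+1) c)

/-- `l`-fold pruning `δ ↦ δ^{↓l}` on data (first argument: the level of the input). -/
def downIter {n : ℕ} : ℕ → ℕ → CData n → CData n
  | _, 0, d => d
  | k, (l+1), d => downIter (k-1) l (downD k d)

/-- Truncation `δ ↦ δ^{↑l}` on data (first argument: the level of the input). -/
def upD {n : ℕ} : ℕ → ℕ → CData n → CData n
  | _, 0, d => CData.mk d.S (fun _ => [])
  | 0, (_+1), d => d
  | (k+1), (l+1), d => CData.mk d.S (fun B => (d.succ B).map fun c => upD k l c)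

/-- The canonical formula `δ` of level `k` with data `d`. -/
def cf {n : ℕ} (P : Finset ℕ) (k : ℕ) (d : CData n) : Formula n := toFormula P k d

/-- `δ^{↓l}` (a canonical formula of level `k - l`). -/
def cfDown {n : ℕ} (P : Finset ℕ) (k l : ℕ) (d : CData n) : Formula n :=
  toFormula P (k - l) (downIter k l d)

/-- `δ^{↑l}` (a canonical formula of level `min k l`). -/
def cfUp {n : ℕ} (P : Finset ℕ) (k l : ℕ) (d : CData n) : Formula n :=
  toFormula P (min k l) (upD k l d)

/-- Literal elimination: `φ^p` replaces every occurrence of `¬p` by `⊤` and subsequently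
every remaining occurrence of `p` by `⊤`. -/
def elim {n : ℕ} (p : ℕ) : Formula n → Formula n
  | .top => .top
  | .bot => .bot
  | .atom q => if q = p then .top else .atom q
  | .neg (.atom q) => if q = p then .top else .neg (.atom q)
  | .neg φ => .neg (elim p φ)
  | .and φ ψ => .and (elim p φ) (elim p ψ)
  | .or φ ψ => .or (elim p φ) (elim p ψ)
  | .D B φ => .D B (elim p φ)

/-!
Every pointed model satisfies exactly one d-canonical formula of depth `k` over `P`: the minterm
of its valuation, together with, for each `B`, the finitely many canonical formulas of depth
`k - 1` true at its `R_B`-successors. Two pointed models satisfying the same such formula agree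
on every formula of depth at most `k` over `P`. Hence `φ` is equivalent to the disjunction of the
canonical formulas that are `L`-satisfiable together with `φ`; and any `Φ` with `φ ≡_L ⋁Φ` consists
of exactly these, since a world satisfying `δ ∧ φ` satisfies some member of `Φ`, which must be `δ`.
-/

lemma _root_.Set.Finite.range_of_factor {α β γ : Type*} {f : α → β} {g : α → γ}
    (hg : (Set.range g).Finite) (hfg : ∀ x y, g x = g y → f x = f y) : (Set.range f).Finite := by
  have := hg.to_subtype
  refine (Set.finite_range fun c : Set.range g => f c.2.choose).subset ?_
  rintro _ ⟨x, rfl⟩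
  exact ⟨⟨g x, x, rfl⟩, hfg _ _ (Exists.choose_spec (⟨x, rfl⟩ : ∃ y, g y = g x))⟩

section

variable {n : ℕ}

lemma _root_.Nat.testBit_sum_two_pow (s : Finset ℕ) (j : ℕ) :
    (∑ i ∈ s, 2 ^ i).testBit j ↔ j ∈ s := by
  rw [← Nat.mem_bitIndices, ← List.mem_toFinset, Finset.toFinset_bitIndices_sum_two_pow]

lemma sum_two_pow_val_eq_sum_map (B : Finset (Fin n)) :
    ∑ i ∈ B, 2 ^ (i : ℕ) = ∑ i ∈ B.map Fin.valEmbedding, 2 ^ i := by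
  rw [Finset.sum_map]; rfl

lemma leftInverse_natToFinset :
    Function.LeftInverse (natToFinset n) fun B : Finset (Fin n) => ∑ i ∈ B, 2 ^ (i : ℕ) := by
  intro B
  ext i
  dsimp only
  rw [natToFinset, Finset.mem_filter, sum_two_pow_val_eq_sum_map, Nat.testBit_sum_two_pow]
  simp [Fin.val_inj]

lemma mem_neSubsets (B : {B : Finset (Fin n) // B.Nonempty}) : B ∈ neSubsets n := by
  refine List.mem_filterMap.2
    ⟨B.1, List.mem_map.2 ⟨_, ?_, leftInverse_natToFinset B.1⟩, dif_pos B.2⟩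
  dsimp only
  rw [List.mem_range, sum_two_pow_val_eq_sum_map]
  exact Nat.geomSum_lt le_rfl (by simp)

lemma fcode_injective : Function.Injective (fcode : Formula n → ℕ) := by
  intro φ
  induction φ <;> intro ψ h <;> cases ψ <;>
    simp_all [fcode, Nat.pair_eq_pair, leftInverse_natToFinset.injective.eq_iff, Subtype.ext_iff]
  all_goals grind

lemma mem_insertF {φ ψ : Formula n} {l : List (Formula n)} :
    ψ ∈ insertF φ l ↔ ψ = φ ∨ ψ ∈ l := by
  induction l with
  | nil => simp [insertF]
  | cons a t ih =>
    rw [insertF]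
    split_ifs with hlt heq
    · simp
    · simp [fcode_injective heq]
    · simp only [List.mem_cons, ih]
      tauto

lemma mem_normList {ψ : Formula n} {l : List (Formula n)} : ψ ∈ normList l ↔ ψ ∈ l := by
  induction l with
  | nil => simp [normList]
  | cons a t ih => simp [normList, mem_insertF, ← ih]

lemma pairwise_insertF {φ : Formula n} {l : List (Formula n)}
    (h : l.Pairwise fun a b => fcode a < fcode b) :
    (insertF φ l).Pairwise fun a b => fcode a < fcode b := by
  induction l with
  | nil => simp [insertF]
  | cons a t ih =>
    obtain ⟨ha, ht⟩ := List.pairwise_cons.1 h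
    rw [insertF]
    split_ifs with hlt heq
    · exact List.pairwise_cons.2 ⟨by grind, h⟩
    · exact h
    · refine List.pairwise_cons.2 ⟨fun b hb => ?_, ih ht⟩
      rcases mem_insertF.1 hb with rfl | hb
      · omega
      · exact ha b hb

lemma pairwise_normList (l : List (Formula n)) :
    (normList l).Pairwise fun a b => fcode a < fcode b := by
  induction l with
  | nil => simp [normList]
  | cons a t ih => exact pairwise_insertF ih

lemma normList_eq_of_mem_iff {l₁ l₂ : List (Formula n)} (h : ∀ φ, φ ∈ l₁ ↔ φ ∈ l₂) :
    normList l₁ = normList l₂ := by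
  have : Std.Irrefl fun a b : Formula n => fcode a < fcode b := ⟨fun a => lt_irrefl (fcode a)⟩
  exact (pairwise_normList l₁).eq_of_mem_iff (pairwise_normList l₂) (by simp [mem_normList, h])

lemma toFormula_succ_congr {P : Finset ℕ} {k : ℕ} {d d' : CData n} (hS : d.S ∩ P = d'.S ∩ P)
    (hsucc : ∀ B : Finset (Fin n), B.Nonempty →
      toFormula P k '' {c | c ∈ d.succ B} = toFormula P k '' {c | c ∈ d'.succ B}) :
    toFormula P (k + 1) d = toFormula P (k + 1) d' := by
  simp only [toFormula, hS]
  congr 2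
  refine List.map_congr_left fun B _ => congrArg _ (normList_eq_of_mem_iff fun φ => ?_)
  simpa using Set.ext_iff.1 (hsucc B B.2) φ

lemma finite_range_toFormula (P : Finset ℕ) (k : ℕ) :
    (Set.range (toFormula P k : CData n → Formula n)).Finite := by
  have hS : (Set.range fun d : CData n => d.S ∩ P).Finite :=
    P.powerset.finite_toSet.subset (by rintro _ ⟨d, rfl⟩; simp)
  induction k with
  | zero => exact hS.range_of_factor fun d d' h => congrArg (minterm P) h
  | succ k ih =>
    refine Set.Finite.range_of_factor (g := fun d : CData n =>
      (d.S ∩ P, fun B => toFormula P k '' {c | c ∈ d.succ B})) ?_ fun d d' h =>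
        toFormula_succ_congr (Prod.ext_iff.1 h).1 fun B _ => congrFun (Prod.ext_iff.1 h).2 B
    refine (hS.prod (Set.Finite.pi fun _ => ih.finite_subsets)).subset ?_
    rintro _ ⟨d, rfl⟩
    exact ⟨⟨d, rfl⟩, fun B _ => Set.image_subset_range _ _⟩

variable {W : Type} {M : KModel n W} {s : W}

lemma sat_bigAnd {l : List (Formula n)} : Sat M s (bigAnd l) ↔ ∀ φ ∈ l, Sat M s φ := by
  induction l with
  | nil => simp [bigAnd, Sat]
  | cons a t ih => simp [bigAnd, Sat, ih]

lemma sat_bigOr {l : List (Formula n)} : Sat M s (bigOr l) ↔ ∃ φ ∈ l, Sat M s φ := by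
  induction l with
  | nil => simp [bigOr, Sat]
  | cons a t ih => simp [bigOr, Sat, ih]

lemma sat_minterm_inter {P S : Finset ℕ} :
    Sat M s (minterm P (S ∩ P)) ↔ ∀ q ∈ P, (q ∈ S ↔ q ∈ M.V s) := by
  simp only [minterm, sat_bigAnd, List.forall_mem_map, Finset.mem_sort]
  refine forall₂_congr fun q hq => ?_
  by_cases hS : q ∈ S <;> simp [Sat, hS, hq]

lemma sat_nabla {B : {B : Finset (Fin n) // B.Nonempty}} {l : List (Formula n)} :
    Sat M s (nabla B l) ↔
      (∀ t, M.RB B.1 s t → ∃ φ ∈ l, Sat M t φ) ∧ ∀ φ ∈ l, ∃ t, M.RB B.1 s t ∧ Sat M t φ := by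
  simp [nabla, Sat, sat_bigAnd, sat_bigOr]

lemma sat_toFormula_succ {P : Finset ℕ} {k : ℕ} {d : CData n} :
    Sat M s (toFormula P (k + 1) d) ↔ (∀ q ∈ P, (q ∈ d.S ↔ q ∈ M.V s)) ∧
      ∀ B : Finset (Fin n), B.Nonempty →
        (∀ t, M.RB B s t → ∃ c ∈ d.succ B, Sat M t (toFormula P k c)) ∧
        ∀ c ∈ d.succ B, ∃ t, M.RB B s t ∧ Sat M t (toFormula P k c) := by
  have hnabla : ∀ B : {B : Finset (Fin n) // B.Nonempty},
      Sat M s (nabla B (normList ((d.succ B).map (toFormula P k)))) ↔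
        (∀ t, M.RB B s t → ∃ c ∈ d.succ B, Sat M t (toFormula P k c)) ∧
        ∀ c ∈ d.succ B, ∃ t, M.RB B s t ∧ Sat M t (toFormula P k c) := by
    simp [sat_nabla, mem_normList]
  show Sat M s (minterm _ _) ∧ Sat M s (bigAnd _) ↔ _
  rw [sat_minterm_inter, sat_bigAnd, List.forall_mem_map]
  simp only [hnabla]
  exact and_congr_right' ⟨fun h B hB => h ⟨B, hB⟩ (mem_neSubsets _), fun h B _ => h B B.2⟩

lemma sat_toFormula_valuation {P : Finset ℕ} {k : ℕ} {d : CData n}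
    (h : Sat M s (toFormula P k d)) : ∀ q ∈ P, (q ∈ d.S ↔ q ∈ M.V s) := by
  cases k with
  | zero => exact sat_minterm_inter.1 h
  | succ k => exact (sat_toFormula_succ.1 h).1

lemma exists_sat_toFormula (P : Finset ℕ) (k : ℕ) (M : KModel n W) (s : W) :
    ∃ d : CData n, Sat M s (toFormula P k d) := by
  classical
  induction k generalizing s with
  | zero =>
    exact ⟨.mk {q ∈ P | q ∈ M.V s} fun _ => [], sat_minterm_inter.2 (by simp +contextual [CData.S])⟩
  | succ k ih =>
    choose f hf using ih
    have : Nonempty (CData n) := ⟨f s⟩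
    set g := Function.invFun (toFormula P k : CData n → Formula n)
    have hinv : ∀ t, Sat M t (toFormula P k (g (toFormula P k (f t)))) := fun t => by
      rw [Function.invFun_eq (f := toFormula P k) ⟨f t, rfl⟩]; exact hf t
    have hfin : ∀ B, (toFormula P k ∘ f '' {t | M.RB B s t}).Finite := fun B =>
      (finite_range_toFormula P k).subset (Set.image_subset_iff.2 fun t _ => ⟨f t, rfl⟩)
    -- one datum for each of the finitely many level-`k` canonical formulas
    -- true at an `R_B`-successor
    refine ⟨.mk {q ∈ P | q ∈ M.V s} fun B => (hfin B).toFinset.toList.map g, ?_⟩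
    refine sat_toFormula_succ.2 ⟨by simp +contextual [CData.S], fun B _ => ⟨fun t ht => ?_, ?_⟩⟩
    · exact ⟨_, List.mem_map.2 ⟨_, by simpa using ⟨t, ht, rfl⟩, rfl⟩, hinv t⟩
    · simp only [CData.succ, List.mem_map, Finset.mem_toList, Set.Finite.mem_toFinset]
      rintro _ ⟨_, ⟨t, ht, rfl⟩, rfl⟩
      exact ⟨t, ht, hinv t⟩

lemma S_inter_eq_of_sat_toFormula {P : Finset ℕ} {k k' : ℕ} {d d' : CData n}
    (h : Sat M s (toFormula P k d)) (h' : Sat M s (toFormula P k' d')) :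
    d.S ∩ P = d'.S ∩ P := by
  ext q
  simp only [Finset.mem_inter, and_congr_left_iff]
  intro hq
  rw [sat_toFormula_valuation h q hq, sat_toFormula_valuation h' q hq]

lemma toFormula_eq_of_sat {P : Finset ℕ} {k : ℕ} {d d' : CData n}
    (h : Sat M s (toFormula P k d)) (h' : Sat M s (toFormula P k d')) :
    toFormula P k d = toFormula P k d' := by
  induction k generalizing s d d' with
  | zero => exact congrArg (minterm P) (S_inter_eq_of_sat_toFormula h h')
  | succ k ih =>
    have hsub : ∀ {s : W} {d d' : CData n}, Sat M s (toFormula P (k + 1) d) →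
        Sat M s (toFormula P (k + 1) d') → ∀ B : Finset (Fin n), B.Nonempty →
        toFormula P k '' {c | c ∈ d.succ B} ⊆ toFormula P k '' {c | c ∈ d'.succ B} := by
      rintro s d d' h h' B hB _ ⟨c, hc, rfl⟩
      obtain ⟨t, ht, htc⟩ := ((sat_toFormula_succ.1 h).2 B hB).2 c hc
      obtain ⟨c', hc', htc'⟩ := ((sat_toFormula_succ.1 h').2 B hB).1 t ht
      exact ⟨c', hc', (ih htc htc').symm⟩
    exact toFormula_succ_congr (S_inter_eq_of_sat_toFormula h h') fun B hB =>
      (hsub h h' B hB).antisymm (hsub h' h B hB)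

lemma sat_of_sat_toFormula {P : Finset ℕ} {φ : Formula n} {k : ℕ} (hk : φ.depth ≤ k)
    (hP : φ.atoms ⊆ P) {d : CData n} {W' : Type} {M' : KModel n W'} {s' : W'}
    (h : Sat M s (toFormula P k d)) (h' : Sat M' s' (toFormula P k d)) (hφ : Sat M s φ) :
    Sat M' s' φ := by
  induction φ generalizing k d W W' M M' s s' with
  | top => trivial
  | bot => exact hφ.elim
  | atom q =>
    have hq : q ∈ P := hP (Finset.mem_singleton_self q)
    exact (sat_toFormula_valuation h' q hq).1 ((sat_toFormula_valuation h q hq).2 hφ)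
  | neg ψ ih => exact fun hψ => hφ (ih hk hP h' h hψ)
  | and ψ χ ihψ ihχ =>
    rw [Formula.depth, max_le_iff] at hk
    rw [Formula.atoms, Finset.union_subset_iff] at hP
    exact ⟨ihψ hk.1 hP.1 h h' hφ.1, ihχ hk.2 hP.2 h h' hφ.2⟩
  | or ψ χ ihψ ihχ =>
    rw [Formula.depth, max_le_iff] at hk
    rw [Formula.atoms, Finset.union_subset_iff] at hP
    exact hφ.imp (ihψ hk.1 hP.1 h h') (ihχ hk.2 hP.2 h h')
  | D B ψ ih =>
    rw [Formula.depth] at hk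
    obtain ⟨k, rfl⟩ : ∃ k', k = k' + 1 := ⟨k - 1, by omega⟩
    intro t' ht'
    obtain ⟨c, hc, htc'⟩ := ((sat_toFormula_succ.1 h').2 B B.2).1 t' ht'
    obtain ⟨t, ht, htc⟩ := ((sat_toFormula_succ.1 h).2 B B.2).2 c hc
    exact ih (Nat.le_of_succ_le_succ hk) hP htc htc' (hφ t ht)

lemma sat_bigOr_toList {Φ : Finset (Formula n)} :
    Sat M s (bigOr Φ.toList) ↔ ∃ δ ∈ Φ, Sat M s δ := by
  simp [sat_bigOr]

lemma mem_iff_of_equivL {L : MSys} {P : Finset ℕ} {k : ℕ} {φ δ : Formula n}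
    {Φ : Finset (Formula n)} (hΦ : ↑Φ ⊆ {δ : Formula n | δ ∈ DP P k ∧ SatL L δ})
    (hφ : EquivL L φ (bigOr Φ.toList)) :
    δ ∈ Φ ↔ δ ∈ DP P k ∧ SatL L (δ.and φ) := by
  constructor
  · intro hδ
    obtain ⟨hδP, W, M, s, hM, hs⟩ := hΦ hδ
    exact ⟨hδP, W, M, s, hM, hs, hφ.2 W M hM s (sat_bigOr_toList.2 ⟨δ, hδ, hs⟩)⟩
  · rintro ⟨⟨d, rfl⟩, W, M, s, hM, hd, hs⟩
    obtain ⟨δ', hδ', hs'⟩ := sat_bigOr_toList.1 (hφ.1 W M hM s hs)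
    obtain ⟨⟨d', rfl⟩, -⟩ := hΦ hδ'
    rwa [toFormula_eq_of_sat hd hs']

end

/-- every formula is `L`-equivalent to the disjunction of a unique set of
`L`-satisfiable d-canonical formulas of any depth `k ≥ dep(φ)` over its atoms. -/
theorem unique_canonical_disjunction {n : ℕ} (L : MSys) (φ : Formula n) (k : ℕ)
    (hk : φ.depth ≤ k) :
    ∃! Φ : Finset (Formula n),
      (↑Φ ⊆ {δ : Formula n | δ ∈ DP φ.atoms k ∧ SatL L δ}) ∧
      EquivL L φ (bigOr Φ.toList) := by
  have hfin : {δ : Formula n | δ ∈ DP φ.atoms k ∧ SatL L (δ.and φ)}.Finite :=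
    (finite_range_toFormula φ.atoms k).subset fun δ h => h.1
  have hΦ : ↑hfin.toFinset ⊆ {δ : Formula n | δ ∈ DP φ.atoms k ∧ SatL L δ} := by
    rintro δ hδ
    obtain ⟨hδP, W, M, s, hM, hs, -⟩ := hfin.mem_toFinset.1 hδ
    exact ⟨hδP, W, M, s, hM, hs⟩
  have hφ : EquivL L φ (bigOr hfin.toFinset.toList) := by
    refine ⟨fun W M hM s hs => ?_, fun W M hM s hs => ?_⟩
    · obtain ⟨d, hd⟩ := exists_sat_toFormula φ.atoms k M s
      exact sat_bigOr_toList.2 ⟨_, hfin.mem_toFinset.2 ⟨⟨d, rfl⟩, W, M, s, hM, hd, hs⟩, hd⟩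
    · obtain ⟨δ, hδ, hsδ⟩ := sat_bigOr_toList.1 hs
      obtain ⟨⟨d, rfl⟩, W', M', s', -, hd', hs'⟩ := hfin.mem_toFinset.1 hδ
      exact sat_of_sat_toFormula hk subset_rfl hd' hsδ hs'
  refine ⟨hfin.toFinset, ⟨hΦ, hφ⟩, fun Φ ⟨hΦ', hφ'⟩ => Finset.ext fun δ => ?_⟩
  rw [mem_iff_of_equivL hΦ' hφ', mem_iff_of_equivL hΦ hφ]

end DKLogic
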